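/- Fix T > 0, M ∈ ℕ₊, and a step function Δ : ℝⁿ → (0, T] satisfying Δ(x) ≥ (a|x|^q + b)^{−1} for constants a, b, q > 0. Suppose a partition 0 = t₀ < t₁ < ⋯ of [0,1] is generated by t_{k+1} = t_k + Δ_k with Δ_k = min{Δ(X_k)/M, 1 − t_k} for some points X_k ∈ ℝⁿ, and let N₁ be the first index with t_{N₁} = 1. Then N₁ ≤ 1 + M·∫₀¹ (a|X̄(t)|^q + b) dt, where X̄(t) = X_k for t ∈ [t_k, t_{k+1}). -/

import Mathlib

/-!
Away from the last step the partition moves by `Δ(X_k)/M ≥ 1 / (M (a|X_k|^q + b))`, so every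
such step contributes at least `1/M` to the integral of the piecewise constant function
`a|X̄|^q + b` over its subinterval, while the last step contributes a nonnegative amount.
-/

open MeasureTheory Set Finset

section StepFunction

variable {f : ℝ → ℝ} {a b c : ℝ}

lemma intervalIntegrable_of_eqOn_Ico (hab : a ≤ b) (h : EqOn f (fun _ => c) (Ico a b)) :
    IntervalIntegrable f volume a b := by
  rw [intervalIntegrable_iff_integrableOn_Ioc_of_le hab, integrableOn_Ioc_iff_integrableOn_Ioo]
  exact (integrableOn_const measure_Ioo_lt_top.ne).congr_fun
    (h.mono Set.Ioo_subset_Ico_self).symm measurableSet_Ioo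

lemma intervalIntegral_eq_of_eqOn_Ico (hab : a ≤ b) (h : EqOn f (fun _ => c) (Ico a b)) :
    ∫ s in a..b, f s = (b - a) * c := by
  rw [← smul_eq_mul, ← intervalIntegral.integral_const, intervalIntegral.integral_of_le hab,
    intervalIntegral.integral_of_le hab, integral_Ioc_eq_integral_Ioo,
    integral_Ioc_eq_integral_Ioo]
  exact setIntegral_congr_fun measurableSet_Ioo (h.mono Set.Ioo_subset_Ico_self)

lemma intervalIntegral_eq_sum_of_eqOn_Ico {t c : ℕ → ℝ} {N : ℕ}
    (hmono : ∀ k < N, t k ≤ t (k + 1))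
    (hf : ∀ k < N, EqOn f (fun _ => c k) (Ico (t k) (t (k + 1)))) :
    ∫ s in t 0..t N, f s = ∑ k ∈ range N, (t (k + 1) - t k) * c k := by
  rw [← intervalIntegral.sum_integral_adjacent_intervals
    fun k hk => intervalIntegrable_of_eqOn_Ico (hmono k hk) (hf k hk)]
  exact sum_congr rfl fun k hk =>
    intervalIntegral_eq_of_eqOn_Ico (hmono k (mem_range.1 hk)) (hf k (mem_range.1 hk))

end StepFunction

section TruncatedSteps

variable {t h : ℕ → ℝ} {k : ℕ}

lemma le_succ_of_truncated_step (htsucc : ∀ k, t (k + 1) = t k + min (h k) (1 - t k))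
    (hh : 0 ≤ h k) (ht : t k ≤ 1) : t k ≤ t (k + 1) := by
  rw [htsucc]
  linarith [le_min hh (sub_nonneg.2 ht)]

lemma succ_sub_eq_of_truncated_step (htsucc : ∀ k, t (k + 1) = t k + min (h k) (1 - t k))
    (ht : t (k + 1) < 1) : t (k + 1) - t k = h k := by
  rw [htsucc] at ht ⊢
  rcases min_cases (h k) (1 - t k) with ⟨hmin, _⟩ | ⟨hmin, _⟩ <;> rw [hmin] at ht ⊢ <;> linarith

end TruncatedSteps

theorem stmt_12_general {n : ℕ} (M : ℕ) (hM : 1 ≤ M)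
    (a b q : ℝ) (ha : 0 < a) (hb : 0 < b)
    (Δ : EuclideanSpace ℝ (Fin n) → ℝ)
    (hΔpos : ∀ x, 0 < Δ x)
    (hΔlb : ∀ x, (a * ‖x‖ ^ q + b)⁻¹ ≤ Δ x)
    (X : ℕ → EuclideanSpace ℝ (Fin n)) (t : ℕ → ℝ)
    (ht0 : t 0 = 0)
    (htsucc : ∀ k, t (k + 1) = t k + min (Δ (X k) / M) (1 - t k))
    (N₁ : ℕ) (hN₁ : t N₁ = 1) (hN₁min : ∀ k < N₁, t k < 1)
    (Xbar : ℝ → EuclideanSpace ℝ (Fin n))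
    (hXbar : ∀ k, ∀ s ∈ Set.Ico (t k) (t (k + 1)), Xbar s = X k) :
    (N₁ : ℝ) ≤ 1 + M * ∫ s in (0 : ℝ)..1, (a * ‖Xbar s‖ ^ q + b) := by
  set c : ℕ → ℝ := fun k => a * ‖X k‖ ^ q + b
  have hM0 : (0 : ℝ) < M := by exact_mod_cast hM
  have hc : ∀ k, 0 < c k := fun k => by positivity
  obtain ⟨K, rfl⟩ : ∃ K, N₁ = K + 1 :=
    Nat.exists_eq_succ_of_ne_zero fun h => by simp [h, ht0] at hN₁
  have hmono : ∀ k < K + 1, t k ≤ t (k + 1) := fun k hk =>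
    le_succ_of_truncated_step htsucc (div_pos (hΔpos _) hM0).le (hN₁min k hk).le
  have hint : ∫ s in (0 : ℝ)..1, (a * ‖Xbar s‖ ^ q + b)
      = ∑ k ∈ range (K + 1), (t (k + 1) - t k) * c k := by
    rw [← ht0, ← hN₁]
    exact intervalIntegral_eq_sum_of_eqOn_Ico hmono fun k _ s hs => by simp [c, hXbar k s hs]
  have hstep : ∀ k < K, 1 ≤ M * ((t (k + 1) - t k) * c k) := fun k hk => by
    rw [succ_sub_eq_of_truncated_step htsucc (hN₁min (k + 1) (by omega)), ← mul_assoc,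
      mul_div_cancel₀ _ hM0.ne']
    exact (inv_mul_cancel₀ (hc k).ne').symm.trans_le
      (mul_le_mul_of_nonneg_right (hΔlb (X k)) (hc k).le)
  have hlast : 0 ≤ M * ((t (K + 1) - t K) * c K) :=
    mul_nonneg hM0.le (mul_nonneg (sub_nonneg.2 (hmono K K.lt_succ_self)) (hc K).le)
  have hsum : (K : ℝ) ≤ ∑ k ∈ range K, M * ((t (k + 1) - t k) * c k) := by
    simpa using sum_le_sum fun k hk => hstep k (mem_range.1 hk)
  rw [hint, sum_range_succ, mul_add, mul_sum]
  push_cast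
  linarith

/-- Deterministic counting bound for the number of adaptive steps needed to reach `t = 1`:
`N₁ ≤ 1 + M ∫₀¹ (a|X̄(t)|^q + b) dt`. -/
theorem stmt_12 {n : ℕ} (T : ℝ) (hT : 0 < T) (M : ℕ) (hM : 1 ≤ M)
    (a b q : ℝ) (ha : 0 < a) (hb : 0 < b) (hq : 0 < q)
    (Δ : EuclideanSpace ℝ (Fin n) → ℝ)
    (hΔpos : ∀ x, 0 < Δ x) (hΔT : ∀ x, Δ x ≤ T)
    (hΔlb : ∀ x, (a * ‖x‖ ^ q + b)⁻¹ ≤ Δ x)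
    (X : ℕ → EuclideanSpace ℝ (Fin n)) (t : ℕ → ℝ)
    (ht0 : t 0 = 0)
    (htsucc : ∀ k, t (k + 1) = t k + min (Δ (X k) / M) (1 - t k))
    (N₁ : ℕ) (hN₁ : t N₁ = 1) (hN₁min : ∀ k < N₁, t k < 1)
    (Xbar : ℝ → EuclideanSpace ℝ (Fin n))
    (hXbar : ∀ k, ∀ s ∈ Set.Ico (t k) (t (k + 1)), Xbar s = X k)
    (hInt : IntervalIntegrable (fun s => a * ‖Xbar s‖ ^ q + b) volume 0 1) :
    (N₁ : ℝ) ≤ 1 + M * ∫ s in (0 : ℝ)..1, (a * ‖Xbar s‖ ^ q + b) :=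
  stmt_12_general M hM a b q ha hb Δ hΔpos hΔlb X t ht0 htsucc N₁ hN₁ hN₁min Xbar hXbar
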